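/- arXiv:2403.00480 — 2 statements merged into one kernel-verified Lean document; each statement's English description precedes it below -/
import Mathlib

section
/- Under the local Lipschitz chart hypotheses: (i) for every 0 < r ≤ R̂/(2+Λ₀), B_D(0, (1+Λ₀)⁻¹ r) ⊆ U(r) ⊆ B_D(0, (√2+Λ₀) r); (ii) setting Λ₁ := max(Λ₀, 1/2), for every x ∈ U(R̂/(6+4Λ₀)) one has (1+Λ₁²)^{−1/2} ρ_D(x) ≤ δ_D(x) ≤ ρ_D(x). -/
open MeasureTheory Metric Set Filter
open scoped ENNReal NNReal Topology

noncomputable section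

/-- The first `n` coordinates of a point of `ℝ^(n+1)`. -/
def tilde {n : ℕ} (x : EuclideanSpace ℝ (Fin (n + 1))) : EuclideanSpace ℝ (Fin n) :=
  WithLp.toLp 2 (fun i : Fin n => x i.castSucc)

/-- The last ("vertical") coordinate of a point of `ℝ^(n+1)`. -/
def vert {n : ℕ} (x : EuclideanSpace ℝ (Fin (n + 1))) : ℝ := x (Fin.last n)

/-- The vertical distance `ρ_D(x) = x_d - Ψ(x̃)` in the chart. -/
def vrho {n : ℕ} (Ψ : EuclideanSpace ℝ (Fin n) → ℝ) (x : EuclideanSpace ℝ (Fin (n + 1))) : ℝ :=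
  vert x - Ψ (tilde x)

/-- The box `U(a,b) = {x ∈ D : |x̃| < a, 0 < ρ_D(x) < b}`. -/
def Ubox (n : ℕ) (Ψ : EuclideanSpace ℝ (Fin n) → ℝ)
    (D : Set (EuclideanSpace ℝ (Fin (n + 1)))) (a b : ℝ) :
    Set (EuclideanSpace ℝ (Fin (n + 1))) :=
  {x | x ∈ D ∧ ‖tilde x‖ < a ∧ 0 < vrho Ψ x ∧ vrho Ψ x < b}

/-!
Part (i) comes from `|x_d - ρ_D(x)| = |Ψ(x̃)| ≤ Λ₀ |x̃|` and `|x|² = |x̃|² + x_d²`.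
For (ii), the point `x - ρ_D(x) e_d` lies on the graph of `Ψ`, hence on `∂D`, which gives
`δ_D(x) ≤ ρ_D(x)`. Conversely `ρ_D` is `√(1 + Λ²)`-Lipschitz and nonpositive on the part of
the chart outside `D`, so a boundary point `y` with `|x - y| < ρ_D(x)` (still in the chart) satisfies
`ρ_D(x) ≤ ρ_D(x) - ρ_D(y) ≤ √(1 + Λ²) |x - y|`.
-/

section Coordinates

variable {n : ℕ}

@[simp] lemma tilde_add (x y : EuclideanSpace ℝ (Fin (n + 1))) :
    tilde (x + y) = tilde x + tilde y := rfl

@[simp] lemma tilde_sub (x y : EuclideanSpace ℝ (Fin (n + 1))) :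
    tilde (x - y) = tilde x - tilde y := rfl

@[simp] lemma vert_add (x y : EuclideanSpace ℝ (Fin (n + 1))) :
    vert (x + y) = vert x + vert y := rfl

@[simp] lemma vert_sub (x y : EuclideanSpace ℝ (Fin (n + 1))) :
    vert (x - y) = vert x - vert y := rfl

@[simp] lemma tilde_single_last (t : ℝ) :
    tilde (EuclideanSpace.single (Fin.last n) t) = 0 := by
  ext i
  simp [tilde]

@[simp] lemma vert_single_last (t : ℝ) :
    vert (EuclideanSpace.single (Fin.last n) t) = t := by
  simp [vert]

lemma vrho_add_single_last (Ψ : EuclideanSpace ℝ (Fin n) → ℝ)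
    (x : EuclideanSpace ℝ (Fin (n + 1))) (t : ℝ) :
    vrho Ψ (x + EuclideanSpace.single (Fin.last n) t) = vrho Ψ x + t := by
  simp only [vrho, vert_add, tilde_add, tilde_single_last, vert_single_last, add_zero]
  ring

lemma norm_sq_eq_norm_tilde_sq_add_vert_sq (x : EuclideanSpace ℝ (Fin (n + 1))) :
    ‖x‖ ^ 2 = ‖tilde x‖ ^ 2 + vert x ^ 2 := by
  simp only [EuclideanSpace.norm_sq_eq, Real.norm_eq_abs, sq_abs, Fin.sum_univ_castSucc, tilde,
    vert]

lemma norm_tilde_le_norm (x : EuclideanSpace ℝ (Fin (n + 1))) : ‖tilde x‖ ≤ ‖x‖ := by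
  have h := norm_sq_eq_norm_tilde_sq_add_vert_sq x
  nlinarith [norm_nonneg x, norm_nonneg (tilde x), sq_nonneg (vert x)]

lemma abs_vert_le_norm (x : EuclideanSpace ℝ (Fin (n + 1))) : |vert x| ≤ ‖x‖ := by
  have h := norm_sq_eq_norm_tilde_sq_add_vert_sq x
  nlinarith [norm_nonneg x, norm_nonneg (tilde x), abs_nonneg (vert x), sq_abs (vert x)]

/-- Cauchy–Schwarz for the vectors `(Λ, 1)` and `(‖x̃‖, |x_d|)`. -/
lemma mul_norm_tilde_add_abs_vert_le (Λ : ℝ) (x : EuclideanSpace ℝ (Fin (n + 1))) :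
    Λ * ‖tilde x‖ + |vert x| ≤ √(1 + Λ ^ 2) * ‖x‖ := by
  rw [← Real.sqrt_sq (norm_nonneg x), norm_sq_eq_norm_tilde_sq_add_vert_sq,
    ← Real.sqrt_mul (by positivity)]
  apply Real.le_sqrt_of_sq_le
  nlinarith [sq_nonneg (‖tilde x‖ - Λ * |vert x|), sq_abs (vert x)]

end Coordinates

section Chart

variable {n : ℕ} {Λ Rh : ℝ} {Ψ : EuclideanSpace ℝ (Fin n) → ℝ}
  {D : Set (EuclideanSpace ℝ (Fin (n + 1)))}

lemma vrho_sub_vrho_le (hΨ : ∀ y z, |Ψ y - Ψ z| ≤ Λ * ‖y - z‖)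
    (x y : EuclideanSpace ℝ (Fin (n + 1))) :
    vrho Ψ x - vrho Ψ y ≤ √(1 + Λ ^ 2) * ‖x - y‖ := by
  have hlip := neg_le_of_abs_le (hΨ (tilde x) (tilde y))
  have hvert := le_abs_self (vert (x - y))
  have hcs := mul_norm_tilde_add_abs_vert_le Λ (x - y)
  simp only [vrho, vert_sub, tilde_sub] at *
  linarith

lemma norm_lt_of_mem_Ubox (hΨ : ∀ y, |Ψ y| ≤ Λ * ‖y‖) (hΛ : 0 ≤ Λ)
    {r : ℝ} {x : EuclideanSpace ℝ (Fin (n + 1))} (hx : x ∈ Ubox n Ψ D r r) :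
    ‖x‖ < (√2 + Λ) * r := by
  obtain ⟨-, htilde, hρ0, hρr⟩ := hx
  have hr : 0 < r := (norm_nonneg _).trans_lt htilde
  have hΨx := abs_le.1 (hΨ (tilde x))
  have hvert : |vert x| < (1 + Λ) * r := by
    have : vert x = vrho Ψ x + Ψ (tilde x) := by simp [vrho]
    rw [abs_lt, this]
    constructor <;> nlinarith [norm_nonneg (tilde x)]
  have hsq : ‖x‖ ^ 2 < ((√2 + Λ) * r) ^ 2 := by
    have htilde_sq : ‖tilde x‖ ^ 2 < r ^ 2 := by gcongr
    have hvert_sq : vert x ^ 2 < ((1 + Λ) * r) ^ 2 := by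
      rw [← sq_abs]; gcongr
    have h2 : √2 ^ 2 = 2 := Real.sq_sqrt (by norm_num)
    rw [norm_sq_eq_norm_tilde_sq_add_vert_sq]
    nlinarith [mul_nonneg (mul_nonneg hΛ hr.le) hr.le, Real.one_lt_sqrt_two]
  exact lt_of_pow_lt_pow_left₀ 2 (by positivity) hsq

variable (hchart : D ∩ ball 0 Rh = {y ∈ ball 0 Rh | Ψ (tilde y) < vert y})
include hchart

lemma mem_iff_vrho_pos {y : EuclideanSpace ℝ (Fin (n + 1))} (hy : ‖y‖ < Rh) :
    y ∈ D ↔ 0 < vrho Ψ y := by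
  have hyR : y ∈ ball 0 Rh := mem_ball_zero_iff.2 hy
  have h := congrArg (y ∈ ·) hchart
  simp only [mem_inter_iff, mem_ofPred_eq, hyR, and_true, true_and, eq_iff_iff] at h
  rw [h, vrho, sub_pos]

lemma inter_ball_subset_Ubox (hΨ : ∀ y, |Ψ y| ≤ Λ * ‖y‖) (hΛ : 0 ≤ Λ) {r : ℝ}
    (hr : (1 + Λ)⁻¹ * r ≤ Rh) : D ∩ ball 0 ((1 + Λ)⁻¹ * r) ⊆ Ubox n Ψ D r r := by
  rintro x ⟨hxD, hx⟩
  rw [mem_ball_zero_iff] at hx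
  have hx' : ‖x‖ < Rh := hx.trans_le hr
  rw [lt_inv_mul_iff₀ (by linarith)] at hx
  have htilde := norm_tilde_le_norm x
  have hvert := le_of_abs_le (abs_vert_le_norm x)
  have hΨx := neg_le_of_abs_le (hΨ (tilde x))
  refine ⟨hxD, by nlinarith [norm_nonneg x], (mem_iff_vrho_pos hchart hx').1 hxD, ?_⟩
  rw [vrho]
  nlinarith

lemma mem_frontier_of_vrho_eq_zero (hD : IsOpen D) {y : EuclideanSpace ℝ (Fin (n + 1))}
    (hy : ‖y‖ < Rh) (hρ : vrho Ψ y = 0) : y ∈ frontier D := by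
  rw [hD.frontier_eq]
  refine ⟨?_, fun hyD => (mem_iff_vrho_pos hchart hy).1 hyD |>.ne' hρ⟩
  set lift : ℝ → EuclideanSpace ℝ (Fin (n + 1)) := fun t => y + EuclideanSpace.single (Fin.last n) t
  have hlift : Tendsto lift (𝓝[>] 0) (𝓝 y) := by
    have : Continuous lift := continuous_const.add <|
      (PiLp.continuous_toLp 2 _).comp (continuous_single (A := fun _ => ℝ) (Fin.last n))
    have hlift0 : lift 0 = y := by
      simp only [lift, (PiLp.single_eq_zero_iff 2 (Fin.last n)).2 rfl, add_zero]
    exact hlift0 ▸ (this.tendsto 0).mono_left nhdsWithin_le_nhds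
  have hball : ∀ᶠ t in 𝓝[>] 0, ‖lift t‖ < Rh :=
    hlift.eventually (isOpen_lt continuous_norm continuous_const |>.mem_nhds hy)
  refine mem_closure_of_tendsto hlift ?_
  filter_upwards [hball, self_mem_nhdsWithin] with t ht (htpos : 0 < t)
  rw [mem_iff_vrho_pos hchart ht, vrho_add_single_last, hρ, zero_add]
  exact htpos

lemma exists_mem_frontier_dist_eq_vrho (hD : IsOpen D) {x : EuclideanSpace ℝ (Fin (n + 1))}
    (hρ : 0 ≤ vrho Ψ x) (hxR : ‖x‖ + vrho Ψ x < Rh) :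
    ∃ z ∈ frontier D, dist x z = vrho Ψ x := by
  set z := x + EuclideanSpace.single (Fin.last n) (-vrho Ψ x)
  have hxz : dist x z = vrho Ψ x := by
    simp [z, dist_eq_norm, PiLp.norm_single, abs_of_nonneg hρ]
  refine ⟨z, mem_frontier_of_vrho_eq_zero hchart hD ?_ ?_, hxz⟩
  · linarith [norm_le_norm_add_const_of_dist_le (a := z) (b := x) (dist_comm x z ▸ hxz.le)]
  · rw [vrho_add_single_last, add_neg_cancel]

lemma inv_sqrt_mul_vrho_le_infDist (hΨ : ∀ y z, |Ψ y - Ψ z| ≤ Λ * ‖y - z‖)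
    (hD : IsOpen D) {x : EuclideanSpace ℝ (Fin (n + 1))} (hne : (frontier D).Nonempty)
    (hxR : ‖x‖ + vrho Ψ x < Rh) :
    (√(1 + Λ ^ 2))⁻¹ * vrho Ψ x ≤ infDist x (frontier D) := by
  have hs : 1 ≤ √(1 + Λ ^ 2) := Real.one_le_sqrt.2 (by nlinarith)
  rw [le_infDist hne]
  intro y hy
  rw [inv_mul_le_iff₀ (by linarith)]
  rcases le_or_gt (vrho Ψ x) (dist x y) with hfar | hnear
  · nlinarith [dist_nonneg (x := x) (y := y)]
  have hyR : ‖y‖ < Rh := by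
    linarith [norm_le_norm_add_const_of_dist_le (a := y) (b := x) (dist_comm x y ▸ hnear.le)]
  have hyD : y ∉ D := by rw [hD.frontier_eq] at hy; exact hy.2
  have hρy : vrho Ψ y ≤ 0 := not_lt.1 fun h => hyD ((mem_iff_vrho_pos hchart hyR).2 h)
  rw [dist_eq_norm]
  linarith [vrho_sub_vrho_le hΨ x y]

end Chart

theorem stmt_0_general {n : ℕ} (Λ₀ Rh : ℝ) (hΛ₀ : 0 < Λ₀)
    (Ψ : EuclideanSpace ℝ (Fin n) → ℝ) (hΨ0 : Ψ 0 = 0)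
    (hΨlip : ∀ y z : EuclideanSpace ℝ (Fin n), |Ψ y - Ψ z| ≤ Λ₀ * ‖y - z‖)
    (D : Set (EuclideanSpace ℝ (Fin (n + 1)))) (hDopen : IsOpen D)
    (hchart : D ∩ ball (0 : EuclideanSpace ℝ (Fin (n + 1))) Rh
      = {y ∈ ball (0 : EuclideanSpace ℝ (Fin (n + 1))) Rh | Ψ (tilde y) < vert y}) :
    (∀ r : ℝ, 0 < r → r ≤ Rh / (2 + Λ₀) →
      D ∩ ball (0 : EuclideanSpace ℝ (Fin (n + 1))) ((1 + Λ₀)⁻¹ * r) ⊆ Ubox n Ψ D r r ∧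
      Ubox n Ψ D r r ⊆ D ∩ ball (0 : EuclideanSpace ℝ (Fin (n + 1))) ((Real.sqrt 2 + Λ₀) * r)) ∧
    (∀ x ∈ Ubox n Ψ D (Rh / (6 + 4 * Λ₀)) (Rh / (6 + 4 * Λ₀)),
      (Real.sqrt (1 + max Λ₀ (1 / 2) ^ 2))⁻¹ * vrho Ψ x ≤ infDist x (frontier D) ∧
      infDist x (frontier D) ≤ vrho Ψ x) := by
  have hΨ : ∀ y, |Ψ y| ≤ Λ₀ * ‖y‖ := fun y => by simpa [hΨ0] using hΨlip y 0
  refine ⟨fun r hr hrR => ⟨inter_ball_subset_Ubox hchart hΨ hΛ₀.le ?_, fun x hx =>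
    ⟨hx.1, mem_ball_zero_iff.2 (norm_lt_of_mem_Ubox hΨ hΛ₀.le hx)⟩⟩, fun x hx => ?_⟩
  · rw [le_div_iff₀ (by linarith)] at hrR
    rw [inv_mul_le_iff₀ (by linarith)]
    nlinarith [mul_nonneg (by linarith : (0 : ℝ) ≤ 1 + Λ₀) (sub_nonneg.2 hrR), mul_pos hr hΛ₀,
      mul_pos (mul_pos hr hΛ₀) hΛ₀]
  · have hxR : ‖x‖ + vrho Ψ x < Rh := by
      have hR : 0 < Rh / (6 + 4 * Λ₀) := (norm_nonneg _).trans_lt hx.2.1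
      have hRh : Rh / (6 + 4 * Λ₀) * (6 + 4 * Λ₀) = Rh := div_mul_cancel₀ _ (by linarith)
      nlinarith [norm_lt_of_mem_Ubox hΨ hΛ₀.le hx, hx.2.2.2, Real.sqrt_two_lt_three_halves]
    obtain ⟨z, hz, hxz⟩ := exists_mem_frontier_dist_eq_vrho hchart hDopen hx.2.2.1.le hxR
    have hΨlip₁ : ∀ y z, |Ψ y - Ψ z| ≤ max Λ₀ (1 / 2) * ‖y - z‖ := fun y z =>
      (hΨlip y z).trans (by gcongr; exact le_max_left _ _)
    exact ⟨inv_sqrt_mul_vrho_le_infDist hchart hΨlip₁ hDopen ⟨z, hz⟩ hxR,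
      hxz ▸ infDist_le_dist_of_mem hz⟩

theorem stmt_0 {n : ℕ} (hn : 1 ≤ n) (Λ₀ Rh : ℝ) (hΛ₀ : 0 < Λ₀) (hRh : 0 < Rh)
    (Ψ : EuclideanSpace ℝ (Fin n) → ℝ) (hΨ0 : Ψ 0 = 0)
    (hΨlip : ∀ y z : EuclideanSpace ℝ (Fin n), |Ψ y - Ψ z| ≤ Λ₀ * ‖y - z‖)
    (D : Set (EuclideanSpace ℝ (Fin (n + 1)))) (hDopen : IsOpen D)
    (h0 : (0 : EuclideanSpace ℝ (Fin (n + 1))) ∈ frontier D)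
    (hchart : D ∩ ball (0 : EuclideanSpace ℝ (Fin (n + 1))) Rh
      = {y ∈ ball (0 : EuclideanSpace ℝ (Fin (n + 1))) Rh | Ψ (tilde y) < vert y}) :
    (∀ r : ℝ, 0 < r → r ≤ Rh / (2 + Λ₀) →
      D ∩ ball (0 : EuclideanSpace ℝ (Fin (n + 1))) ((1 + Λ₀)⁻¹ * r) ⊆ Ubox n Ψ D r r ∧
      Ubox n Ψ D r r ⊆ D ∩ ball (0 : EuclideanSpace ℝ (Fin (n + 1))) ((Real.sqrt 2 + Λ₀) * r)) ∧
    (∀ x ∈ Ubox n Ψ D (Rh / (6 + 4 * Λ₀)) (Rh / (6 + 4 * Λ₀)),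
      (Real.sqrt (1 + max Λ₀ (1 / 2) ^ 2))⁻¹ * vrho Ψ x ≤ infDist x (frontier D) ∧
      infDist x (frontier D) ≤ vrho Ψ x) :=
  stmt_0_general Λ₀ Rh hΛ₀ Ψ hΨ0 hΨlip D hDopen hchart
end
end

section
/- (i) If p > α + β̄₂, then condition (F) holds. (ii) If p = α + β₂, ℓ is slowly varying at zero, and there exists c₀ > 0 with Φ₂(r) ≥ c₀ r^{β₂} for all 0 < r ≤ 1, then condition (F) holds. -/
/-!
(i) Comparing with `r = 1` in the upper scaling bound gives `Φ₂ (b / r) ≥ c₂U⁻¹ (b / r) ^ B₂`,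
and Potter's bounds with `ε = (p - α - B₂) / 2` give `ℓ (s / b) / ℓ s ≥ c⁻¹ min (b ^ ε) (b ^ (-ε))`.
The gap `p - α = B₂ + 2ε` pays for the Potter loss: `b ^ (2ε) ≤ b ^ ε` when `b ≤ 1`, and
`b ^ (2ε) ≤ max 1 r ^ (3ε) · b ^ (-ε)` when `1 < b ≤ r`.

(ii) By slow variation `ℓ (s / b) / ℓ s → 1`, so the liminf equals `Φ₂ (b / r)`, which is at least
`c₀ (b / r) ^ β₂ = c₀ r ^ (-β₂) b ^ (p - α)`.
-/

open MeasureTheory Metric Set Filter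
open scoped ENNReal NNReal Topology

noncomputable section

/-- The lower Matuszewska index of a positive function `Φ` at zero. -/
def lowerMatIdx (Φ : ℝ → ℝ) : ℝ :=
  sSup {β : ℝ | ∃ a > 0, ∀ r s : ℝ, 0 < s → s ≤ r → r ≤ 1 → a * (r / s) ^ β ≤ Φ r / Φ s}

/-- Condition (F). -/
def ConditionF (Φ₂ ℓ : ℝ → ℝ) (α p Rh : ℝ) : Prop :=
  ∀ r : ℝ, 0 < r → r ≤ Rh → ∃ C > 0, ∀ b : ℝ, 0 < b → b ≤ r →
    ENNReal.ofReal (C * b ^ (p - α)) ≤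
      Filter.liminf (fun s : ℝ => ENNReal.ofReal (Φ₂ (b / r) * ℓ (s / b) / ℓ s))
        (𝓝[>] (0 : ℝ))

lemma conditionF_of_eventually_le {Φ₂ ℓ : ℝ → ℝ} {α p Rh : ℝ}
    (h : ∀ r : ℝ, 0 < r → r ≤ Rh → ∃ C > 0, ∀ b : ℝ, 0 < b → b ≤ r →
      ∀ᶠ s in 𝓝[>] (0 : ℝ), C * b ^ (p - α) ≤ Φ₂ (b / r) * ℓ (s / b) / ℓ s) :
    ConditionF Φ₂ ℓ α p Rh := by
  intro r hr hrR
  obtain ⟨C, hC, hCb⟩ := h r hr hrR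
  refine ⟨C, hC, fun b hb hbr => le_liminf_of_le (by isBoundedDefault) ?_⟩
  exact (hCb b hb hbr).mono fun s hs => ENNReal.ofReal_le_ofReal hs

lemma inv_mul_rpow_le_of_div_le {Φ : ℝ → ℝ} {c B : ℝ} (hc : 0 < c)
    (hpos : ∀ r : ℝ, 0 < r → 0 < Φ r) (hone : Φ 1 = 1)
    (hup : ∀ r s : ℝ, 0 < s → s ≤ r → r ≤ 1 → Φ r / Φ s ≤ c * (r / s) ^ B)
    {t : ℝ} (ht : 0 < t) (ht1 : t ≤ 1) :
    c⁻¹ * t ^ B ≤ Φ t := by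
  have h := hup 1 t ht ht1 le_rfl
  rw [hone, Real.div_rpow zero_le_one ht.le, Real.one_rpow, div_le_iff₀ (hpos t ht)] at h
  have htB := Real.rpow_pos_of_pos ht B
  rw [inv_mul_le_iff₀ hc]
  calc t ^ B = t ^ B * 1 := (mul_one _).symm
    _ ≤ t ^ B * (c * (1 / t ^ B) * Φ t) := by gcongr
    _ = c * Φ t := by field_simp

/-- Potter's bound, for two arguments in `(0, 1]` in either order. -/
lemma inv_mul_min_rpow_le_div {ℓ : ℝ → ℝ} {c ε a a' : ℝ} (hc : 0 < c)
    (hpos : ∀ r : ℝ, 0 < r → 0 < ℓ r) (ha : a ≤ ε) (ha' : a' ≤ ε)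
    (hscale : ∀ r s : ℝ, 0 < s → s ≤ r → r ≤ 1 →
      c⁻¹ * (r / s) ^ (-a) ≤ ℓ r / ℓ s ∧ ℓ r / ℓ s ≤ c * (r / s) ^ a')
    {x y : ℝ} (hx : 0 < x) (hy : 0 < y) (hx1 : x ≤ 1) (hy1 : y ≤ 1) :
    c⁻¹ * min ((x / y) ^ ε) ((y / x) ^ ε) ≤ ℓ x / ℓ y := by
  rcases le_or_gt y x with hyx | hxy
  · have hxy1 : 1 ≤ x / y := (one_le_div hy).2 hyx
    calc c⁻¹ * min ((x / y) ^ ε) ((y / x) ^ ε) ≤ c⁻¹ * (x / y) ^ (-a) := by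
          gcongr
          have hswap : (y / x) ^ ε = (x / y) ^ (-ε) := by
            rw [Real.rpow_neg (by positivity), ← Real.inv_rpow (by positivity), inv_div]
          rw [hswap]
          exact (min_le_right _ _).trans (Real.rpow_le_rpow_of_exponent_le hxy1 (by linarith))
      _ ≤ ℓ x / ℓ y := (hscale x y hy hyx hx1).1
  · have hxy1 : x / y ≤ 1 := (div_le_one hy).2 hxy.le
    have hup := (hscale y x hx hxy.le hy1).2
    calc c⁻¹ * min ((x / y) ^ ε) ((y / x) ^ ε) ≤ c⁻¹ * (x / y) ^ a' := by
          gcongr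
          exact (min_le_left _ _).trans
            (Real.rpow_le_rpow_of_exponent_ge (by positivity) hxy1 ha')
      _ = (c * (y / x) ^ a')⁻¹ := by
          rw [mul_inv, ← Real.inv_rpow (by positivity), inv_div]
      _ ≤ (ℓ y / ℓ x)⁻¹ := inv_anti₀ (div_pos (hpos y hy) (hpos x hx)) hup
      _ = ℓ x / ℓ y := inv_div _ _

lemma sq_div_cube_le_min_inv {t N : ℝ} (ht : 0 < t) (htN : t ≤ N) (hN : 1 ≤ N) :
    t ^ 2 / N ^ 3 ≤ min t⁻¹ t := by
  have hN0 : 0 < N := one_pos.trans_le hN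
  rw [le_min_iff, div_le_iff₀ (by positivity), div_le_iff₀ (by positivity)]
  constructor
  · rw [← div_eq_inv_mul, le_div_iff₀ ht]
    exact pow_le_pow_left₀ ht.le htN 3 |>.trans_eq' (by ring)
  · nlinarith [pow_le_pow_right₀ hN (show 1 ≤ 3 by norm_num), mul_le_mul_of_nonneg_left htN ht.le]

lemma tendsto_div_of_slowlyVarying {ℓ : ℝ → ℝ} (hpos : ∀ r : ℝ, 0 < r → 0 < ℓ r)
    (hslow : ∀ lam : ℝ, 1 < lam → Tendsto (fun s => ℓ (lam * s) / ℓ s) (𝓝[>] (0 : ℝ)) (𝓝 1))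
    {lam : ℝ} (hlam : 0 < lam) :
    Tendsto (fun s => ℓ (lam * s) / ℓ s) (𝓝[>] (0 : ℝ)) (𝓝 1) := by
  -- Pick `μ > 1` with `μ * λ > 1` and divide the two admissible ratios.
  set μ := 1 + lam⁻¹
  have hμ : 1 < μ := lt_add_of_pos_right 1 (inv_pos.2 hlam)
  have hμlam : 1 < μ * lam := by
    rw [add_mul, inv_mul_cancel₀ hlam.ne', one_mul]
    linarith
  have hscaled : Tendsto (fun s => ℓ (μ * (lam * s)) / ℓ (lam * s)) (𝓝[>] (0 : ℝ)) (𝓝 1) :=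
    (hslow μ hμ).comp (tendsto_iff_comap.2 (comap_mulLeft_nhdsGT_zero hlam).ge)
  have hquot := (hslow (μ * lam) hμlam).div hscaled one_ne_zero
  rw [div_one] at hquot
  refine hquot.congr' ?_
  filter_upwards [self_mem_nhdsWithin] with s (hs : 0 < s)
  simp only [Pi.div_apply, mul_assoc]
  exact div_div_div_cancel_left' _ _ (hpos _ (by positivity)).ne'

theorem conditionF_of_add_lt {Φ₂ ℓ : ℝ → ℝ} {α p Rh B₂ c₂U β₁ β₂ : ℝ} (hp : α + B₂ < p)
    (hΦ₂pos : ∀ r : ℝ, 0 < r → 0 < Φ₂ r) (hΦ₂one : Φ₂ 1 = 1) (hc₂U : 0 < c₂U)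
    (hΦ₂up : ∀ r s : ℝ, 0 < s → s ≤ r → r ≤ 1 → Φ₂ r / Φ₂ s ≤ c₂U * (r / s) ^ B₂)
    (hℓpos : ∀ r : ℝ, 0 < r → 0 < ℓ r)
    (hℓscale : ∀ ε : ℝ, 0 < ε → ∃ c > 1, ∀ r s : ℝ, 0 < s → s ≤ r → r ≤ 1 →
      c⁻¹ * (r / s) ^ (-min ε β₁) ≤ ℓ r / ℓ s ∧ ℓ r / ℓ s ≤ c * (r / s) ^ min ε β₂) :
    ConditionF Φ₂ ℓ α p Rh := by
  refine conditionF_of_eventually_le fun r hr _ => ?_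
  have hε : 0 < (p - α - B₂) / 2 := by linarith
  set ε := (p - α - B₂) / 2 with hεdef
  obtain ⟨c, hc1, hcs⟩ := hℓscale ε hε
  have hc : 0 < c := one_pos.trans hc1
  set N := max 1 r ^ ε
  have hN : 1 ≤ N := Real.one_le_rpow (le_max_left _ _) hε.le
  refine ⟨(c * c₂U)⁻¹ / (r ^ B₂ * N ^ 3), by positivity, fun b hb hbr => ?_⟩
  filter_upwards [Ioo_mem_nhdsGT (lt_min hb one_pos)] with s ⟨hs, hsb⟩
  have hsb_lt : s < b := hsb.trans_le (min_le_left _ _)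
  have hs1 : s < 1 := hsb.trans_le (min_le_right _ _)
  have hΦ := inv_mul_rpow_le_of_div_le hc₂U hΦ₂pos hΦ₂one hΦ₂up
    (div_pos hb hr) ((div_le_one hr).2 hbr)
  have hℓ := inv_mul_min_rpow_le_div hc hℓpos (min_le_left _ _) (min_le_left _ _) hcs
    (div_pos hs hb) hs ((div_le_one hb).2 hsb_lt.le) hs1.le
  rw [div_div_cancel_left' hs.ne', div_div_cancel₀ hs.ne', Real.inv_rpow hb.le] at hℓ
  have hpow := sq_div_cube_le_min_inv (Real.rpow_pos_of_pos hb ε)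
    (Real.rpow_le_rpow hb.le (hbr.trans (le_max_right _ _)) hε.le) hN
  have hpα : b ^ (p - α) = b ^ B₂ * (b ^ ε) ^ 2 := by
    rw [show p - α = B₂ + ε * 2 by rw [hεdef]; ring, Real.rpow_add hb, Real.rpow_mul hb.le,
      Real.rpow_two]
  calc (c * c₂U)⁻¹ / (r ^ B₂ * N ^ 3) * b ^ (p - α)
      = c₂U⁻¹ * (b / r) ^ B₂ * (c⁻¹ * ((b ^ ε) ^ 2 / N ^ 3)) := by
        rw [hpα, Real.div_rpow hb.le hr.le]
        ring
    _ ≤ Φ₂ (b / r) * (ℓ (s / b) / ℓ s) := by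
        gcongr
        · exact (hΦ₂pos _ (div_pos hb hr)).le
        · exact (mul_le_mul_of_nonneg_left hpow (by positivity)).trans hℓ
    _ = Φ₂ (b / r) * ℓ (s / b) / ℓ s := (mul_div_assoc _ _ _).symm

theorem conditionF_of_eq_add {Φ₂ ℓ : ℝ → ℝ} {α p Rh β : ℝ} (hp : p = α + β)
    (hℓpos : ∀ r : ℝ, 0 < r → 0 < ℓ r)
    (hslow : ∀ lam : ℝ, 1 < lam → Tendsto (fun s => ℓ (lam * s) / ℓ s) (𝓝[>] (0 : ℝ)) (𝓝 1))
    (hΦ₂low : ∃ c₀ > 0, ∀ r : ℝ, 0 < r → r ≤ 1 → c₀ * r ^ β ≤ Φ₂ r) :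
    ConditionF Φ₂ ℓ α p Rh := by
  obtain ⟨c₀, hc₀, hΦlow⟩ := hΦ₂low
  intro r hr _
  refine ⟨c₀ / r ^ β, by positivity, fun b hb hbr => ?_⟩
  have hratio : Tendsto (fun s => Φ₂ (b / r) * ℓ (s / b) / ℓ s) (𝓝[>] (0 : ℝ))
      (𝓝 (Φ₂ (b / r))) := by
    have h := (tendsto_div_of_slowlyVarying hℓpos hslow (inv_pos.2 hb)).const_mul (Φ₂ (b / r))
    rw [mul_one] at h
    exact h.congr fun s => by rw [mul_div_assoc, div_eq_inv_mul s b]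
  rw [(ENNReal.tendsto_ofReal hratio).liminf_eq]
  refine ENNReal.ofReal_le_ofReal ?_
  calc c₀ / r ^ β * b ^ (p - α) = c₀ * (b / r) ^ β := by
        rw [hp, add_sub_cancel_left, Real.div_rpow hb.le hr.le]
        ring
    _ ≤ Φ₂ (b / r) := hΦlow _ (div_pos hb hr) ((div_le_one hr).2 hbr)

theorem stmt_18_general (α p Rh : ℝ)
    (Φ₂ ℓ : ℝ → ℝ)
    (hΦ₂pos : ∀ r : ℝ, 0 < r → 0 < Φ₂ r)
    (hΦ₂one : ∀ r : ℝ, 1 ≤ r → Φ₂ r = 1)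
    (b₂ B₂ c₂L c₂U : ℝ) (hc₂U : 0 < c₂U)
    (hΦ₂scale : ∀ r s : ℝ, 0 < s → s ≤ r → r ≤ 1 →
      c₂L * (r / s) ^ b₂ ≤ Φ₂ r / Φ₂ s ∧ Φ₂ r / Φ₂ s ≤ c₂U * (r / s) ^ B₂)
    (hℓpos : ∀ r : ℝ, 0 < r → 0 < ℓ r)
    (β₁ : ℝ)
    (hℓscale : ∀ ε : ℝ, 0 < ε → ∃ c > 1, ∀ r s : ℝ, 0 < s → s ≤ r → r ≤ 1 →
      c⁻¹ * (r / s) ^ (-min ε β₁) ≤ ℓ r / ℓ s ∧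
        ℓ r / ℓ s ≤ c * (r / s) ^ min ε (lowerMatIdx Φ₂)) :
    (α + B₂ < p → ConditionF Φ₂ ℓ α p Rh) ∧
    ((p = α + lowerMatIdx Φ₂ ∧
        (∀ lam : ℝ, 1 < lam → Tendsto (fun s => ℓ (lam * s) / ℓ s) (𝓝[>] (0 : ℝ)) (𝓝 1)) ∧
        (∃ c₀ > 0, ∀ r : ℝ, 0 < r → r ≤ 1 → c₀ * r ^ lowerMatIdx Φ₂ ≤ Φ₂ r)) →
      ConditionF Φ₂ ℓ α p Rh) := by
  exact ⟨fun hp => conditionF_of_add_lt hp hΦ₂pos (hΦ₂one 1 le_rfl) hc₂U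
      (fun r s hs hsr hr => (hΦ₂scale r s hs hsr hr).2) hℓpos hℓscale,
    fun ⟨hp, hslow, hΦ₂low⟩ => conditionF_of_eq_add hp hℓpos hslow hΦ₂low⟩

theorem stmt_18 (α p Rh : ℝ) (hα : 0 < α) (hα2 : α < 2) (hRh : 0 < Rh)
    (Φ₂ ℓ : ℝ → ℝ)
    (hΦ₂meas : Measurable Φ₂) (hΦ₂pos : ∀ r : ℝ, 0 < r → 0 < Φ₂ r)
    (hΦ₂one : ∀ r : ℝ, 1 ≤ r → Φ₂ r = 1)
    (b₂ B₂ c₂L c₂U : ℝ) (hb₂ : 0 ≤ b₂) (hbB₂ : b₂ ≤ B₂) (hc₂L : 0 < c₂L) (hc₂U : 0 < c₂U)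
    (hΦ₂scale : ∀ r s : ℝ, 0 < s → s ≤ r → r ≤ 1 →
      c₂L * (r / s) ^ b₂ ≤ Φ₂ r / Φ₂ s ∧ Φ₂ r / Φ₂ s ≤ c₂U * (r / s) ^ B₂)
    (hℓmeas : Measurable ℓ) (hℓpos : ∀ r : ℝ, 0 < r → 0 < ℓ r)
    (hℓone : ∀ r : ℝ, 1 ≤ r → ℓ r = 1)
    (β₁ : ℝ) (hβ₁ : 0 ≤ β₁)
    (hℓscale : ∀ ε : ℝ, 0 < ε → ∃ c > 1, ∀ r s : ℝ, 0 < s → s ≤ r → r ≤ 1 →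
      c⁻¹ * (r / s) ^ (-min ε β₁) ≤ ℓ r / ℓ s ∧
        ℓ r / ℓ s ≤ c * (r / s) ^ min ε (lowerMatIdx Φ₂)) :
    (α + B₂ < p → ConditionF Φ₂ ℓ α p Rh) ∧
    ((p = α + lowerMatIdx Φ₂ ∧
        (∀ lam : ℝ, 1 < lam → Tendsto (fun s => ℓ (lam * s) / ℓ s) (𝓝[>] (0 : ℝ)) (𝓝 1)) ∧
        (∃ c₀ > 0, ∀ r : ℝ, 0 < r → r ≤ 1 → c₀ * r ^ lowerMatIdx Φ₂ ≤ Φ₂ r)) →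
      ConditionF Φ₂ ℓ α p Rh) :=
  stmt_18_general α p Rh Φ₂ ℓ hΦ₂pos hΦ₂one b₂ B₂ c₂L c₂U hc₂U hΦ₂scale hℓpos β₁ hℓscale
end
end
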